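/- arXiv:2003.01713 — 6 statements merged into one kernel-verified Lean document; each statement's English description precedes it below -/
import Mathlib

section
/- Let ⟨z,w⟩ = i(conj(z¹)w³ − conj(z³)w¹) + conj(z²)w², a pseudo-Hermitian inner product on ℂ³ with matrix h. Suppose Γ : I → ℂ³ is a smooth curve with ⟨Γ(t),Γ(t)⟩ = 0 and ⟨Γ(t),Γ'(t)⟩ = 0 for all t (Legendrian lift), and det(Γ(t),Γ'(t),Γ''(t)) = i for all t (normalization). Then for all t: ⟨Γ,Γ⟩ = ⟨Γ,Γ'⟩ = ⟨Γ',Γ''⟩ = ⟨Γ,Γ'''⟩ = 0 and ⟨Γ',Γ'⟩ = −⟨Γ,Γ''⟩ = 1. -/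
/-! The form `herm` is `⟨z, w⟩ = z̄ᵀ H w` with `det H = -1`, so the Gram matrix of the frames
`(a, b, c)` and `(a, b, d)` has determinant `-conj (det3 a b c) * det3 a b d`. When
`⟨a, a⟩ = ⟨a, b⟩ = 0` this Gram matrix is anti-triangular, and the identity reads
`⟨a, d⟩ ⟨b, b⟩ ⟨c, a⟩ = conj (det3 a b c) * det3 a b d`.

For `(a, b, c) = (Γ, Γ', Γ'')` and `d = Γ''` the right side is `|i|² = 1`. Differentiating
`⟨Γ, Γ'⟩ = 0` gives `⟨Γ, Γ''⟩ = -⟨Γ', Γ'⟩`, so the real number `⟨Γ', Γ'⟩` has cube `1`.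
Differentiating `det3 Γ Γ' Γ'' = i` gives `det3 Γ Γ' Γ''' = 0`, so `d = Γ'''` yields
`⟨Γ, Γ'''⟩ = 0`; differentiating `⟨Γ, Γ''⟩ = -1` finally gives `⟨Γ', Γ''⟩ = 0`. -/

open Complex

/-- The pseudo-Hermitian inner product ⟨z,w⟩ = i(conj z¹ w³ − conj z³ w¹) + conj z² w²,
conjugate-linear in the first argument. -/
noncomputable def herm (z w : Fin 3 → ℂ) : ℂ :=
  Complex.I * ((starRingEnd ℂ) (z 0) * w 2 - (starRingEnd ℂ) (z 2) * w 0) +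
    (starRingEnd ℂ) (z 1) * w 1

/-- Determinant of the 3×3 matrix with columns a, b, c. -/
noncomputable def det3 (a b c : Fin 3 → ℂ) : ℂ :=
  Matrix.det !![a 0, b 0, c 0; a 1, b 1, c 1; a 2, b 2, c 2]

open Matrix

noncomputable def hermMatrix : Matrix (Fin 3) (Fin 3) ℂ := !![0, 0, I; 0, 1, 0; -I, 0, 0]

lemma det_hermMatrix : hermMatrix.det = -1 := by
  simp [hermMatrix, det_fin_three]

lemma herm_eq_dotProduct (z w : Fin 3 → ℂ) : herm z w = star z ⬝ᵥ (hermMatrix *ᵥ w) := by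
  simp only [herm, hermMatrix, dotProduct, Pi.star_apply, RCLike.star_def, cons_mulVec,
    empty_mulVec, Fin.sum_univ_three, cons_val_zero, cons_val_one, cons_val, zero_mul, one_mul,
    neg_mul, add_zero, zero_add]
  ring

lemma herm_conj_symm (z w : Fin 3 → ℂ) : herm w z = starRingEnd ℂ (herm z w) := by
  simp only [herm, map_add, map_mul, map_sub, conj_I, conj_conj, neg_mul]
  ring

lemma det3_eq_det (a b c : Fin 3 → ℂ) : det3 a b c = (of ![a, b, c]).det := by
  rw [det3, ← det_transpose]
  congr 1
  ext i j
  fin_cases i <;> fin_cases j <;> rfl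

lemma det3_apply (a b c : Fin 3 → ℂ) : det3 a b c = a 0 * b 1 * c 2 - a 0 * c 1 * b 2 -
    b 0 * a 1 * c 2 + b 0 * c 1 * a 2 + c 0 * a 1 * b 2 - c 0 * b 1 * a 2 := by
  simp [det3, det_fin_three]

lemma det3_self_left (a b : Fin 3 → ℂ) : det3 a a b = 0 := by
  rw [det3_apply]
  ring

lemma det3_self_right (a b : Fin 3 → ℂ) : det3 a b b = 0 := by
  rw [det3_apply]
  ring

lemma det_herm_gram (u v : Fin 3 → Fin 3 → ℂ) :
    (of fun j k => herm (u j) (v k)).det = -star (of u).det * (of v).det := by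
  have hgram : of (fun j k => herm (u j) (v k)) = (of u)ᴴᵀ * hermMatrix * (of v)ᵀ := by
    ext j k
    simp only [herm_eq_dotProduct, dotProduct, mulVec, mul_apply, Fin.sum_univ_three, of_apply,
      transpose_apply, conjTranspose_apply, Pi.star_apply, RCLike.star_def]
    ring
  rw [hgram, det_mul, det_mul, det_transpose, det_transpose, det_conjTranspose, det_hermMatrix]
  ring

lemma herm_mul_herm_mul_herm {a b c d : Fin 3 → ℂ} (haa : herm a a = 0) (hab : herm a b = 0) :
    herm a d * herm b b * herm c a = starRingEnd ℂ (det3 a b c) * det3 a b d := by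
  have hba : herm b a = 0 := by rw [herm_conj_symm, hab, map_zero]
  have h := det_herm_gram ![a, b, c] ![a, b, d]
  rw [det_fin_three] at h
  simp only [of_apply, cons_val_zero, cons_val_one, cons_val, haa, hab, hba, zero_mul, mul_zero,
    sub_self, add_zero, zero_sub, RCLike.star_def, neg_mul, neg_inj] at h
  rw [det3_eq_det, det3_eq_det]
  linear_combination h

lemma eq_one_of_conj_eq_of_pow_three {z : ℂ} (hz : starRingEnd ℂ z = z) (h3 : z ^ 3 = 1) :
    z = 1 := by
  obtain ⟨r, rfl⟩ := conj_eq_iff_real.mp hz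
  have hr3 : r ^ 3 = 1 := by exact_mod_cast h3
  have hr : r = 1 := by nlinarith [sq_nonneg (r - 1), sq_nonneg (r + 1)]
  simp [hr]

lemma herm_self_eq_one {a b c : Fin 3 → ℂ} (haa : herm a a = 0) (hab : herm a b = 0)
    (hbb : herm b b = -herm a c) (hdet : det3 a b c = I) : herm b b = 1 := by
  have hreal : starRingEnd ℂ (herm b b) = herm b b := (herm_conj_symm b b).symm
  have hca : herm c a = -herm b b := by
    rw [herm_conj_symm, ← neg_neg (herm a c), ← hbb, map_neg, hreal]
  have h := herm_mul_herm_mul_herm (c := c) (d := c) haa hab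
  rw [hdet, conj_I, hca, ← neg_neg (herm a c), ← hbb] at h
  refine eq_one_of_conj_eq_of_pow_three hreal ?_
  linear_combination h - I_sq

section Derivatives

variable {f g h : ℝ → Fin 3 → ℂ} {f' g' h' : Fin 3 → ℂ} {t : ℝ}

lemma HasDerivAt.herm (hf : HasDerivAt f f' t) (hg : HasDerivAt g g' t) :
    HasDerivAt (fun s => herm (f s) (g s)) (herm f' (g t) + herm (f t) g') t := by
  have hf := hasDerivAt_pi.mp hf
  have hg := hasDerivAt_pi.mp hg
  refine (((((hf 0).star.mul (hg 2)).sub ((hf 2).star.mul (hg 0))).const_mul I).add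
    ((hf 1).star.mul (hg 1))).congr_deriv ?_
  simp only [_root_.herm, starRingEnd_apply]
  ring

lemma HasDerivAt.det3 (hf : HasDerivAt f f' t) (hg : HasDerivAt g g' t)
    (hh : HasDerivAt h h' t) :
    HasDerivAt (fun s => det3 (f s) (g s) (h s))
      (det3 f' (g t) (h t) + det3 (f t) g' (h t) + det3 (f t) (g t) h') t := by
  have hf := hasDerivAt_pi.mp hf
  have hg := hasDerivAt_pi.mp hg
  have hh := hasDerivAt_pi.mp hh
  simp_rw [det3_apply]
  refine ((((((((hf 0).mul (hg 1)).mul (hh 2)).sub (((hf 0).mul (hh 1)).mul (hg 2))).sub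
    (((hg 0).mul (hf 1)).mul (hh 2))).add (((hg 0).mul (hh 1)).mul (hf 2))).add
    (((hh 0).mul (hf 1)).mul (hg 2))).sub (((hh 0).mul (hg 1)).mul (hf 2))).congr_deriv ?_
  simp only [Pi.mul_apply]
  ring

end Derivatives

section Calculus

variable {𝕜 E : Type*} [NontriviallyNormedField 𝕜] [NormedAddCommGroup E] [NormedSpace 𝕜 E]

lemma HasDerivAt.eq_zero_of_forall_eq {F : 𝕜 → E} {D c : E} {t : 𝕜}
    (hF : HasDerivAt F D t) (hc : ∀ s, F s = c) : D = 0 := by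
  obtain rfl : F = fun _ => c := funext hc
  exact hF.unique (hasDerivAt_const t c)

lemma hasDerivAt_iteratedDeriv {f : 𝕜 → E} (hf : ContDiff 𝕜 (⊤ : ℕ∞) f) (n : ℕ) (t : 𝕜) :
    HasDerivAt (iteratedDeriv n f) (iteratedDeriv (n + 1) f t) t := by
  rw [iteratedDeriv_succ]
  exact ((hf.differentiable_iteratedDeriv n (by exact_mod_cast WithTop.coe_lt_top _)) t).hasDerivAt

end Calculus

theorem stmt0 (Γ : ℝ → (Fin 3 → ℂ)) (hΓ : ContDiff ℝ (⊤ : ℕ∞) Γ)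
    (h00 : ∀ t, herm (Γ t) (Γ t) = 0)
    (h01 : ∀ t, herm (Γ t) (iteratedDeriv 1 Γ t) = 0)
    (hdet : ∀ t, det3 (Γ t) (iteratedDeriv 1 Γ t) (iteratedDeriv 2 Γ t) = Complex.I) :
    ∀ t, herm (iteratedDeriv 1 Γ t) (iteratedDeriv 2 Γ t) = 0 ∧
      herm (Γ t) (iteratedDeriv 3 Γ t) = 0 ∧
      herm (iteratedDeriv 1 Γ t) (iteratedDeriv 1 Γ t) = 1 ∧
      herm (Γ t) (iteratedDeriv 2 Γ t) = -1 := by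
  set Γ₁ := iteratedDeriv 1 Γ
  set Γ₂ := iteratedDeriv 2 Γ
  set Γ₃ := iteratedDeriv 3 Γ
  have hΓ₀ (t : ℝ) : HasDerivAt Γ (Γ₁ t) t := by
    simpa only [iteratedDeriv_zero] using hasDerivAt_iteratedDeriv hΓ 0 t
  have hΓ₁ : ∀ t, HasDerivAt Γ₁ (Γ₂ t) t := hasDerivAt_iteratedDeriv hΓ 1
  have hΓ₂ : ∀ t, HasDerivAt Γ₂ (Γ₃ t) t := hasDerivAt_iteratedDeriv hΓ 2
  have h11 (t : ℝ) : herm (Γ₁ t) (Γ₁ t) = -herm (Γ t) (Γ₂ t) := by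
    linear_combination ((hΓ₀ t).herm (hΓ₁ t)).eq_zero_of_forall_eq h01
  have h11_one (t : ℝ) : herm (Γ₁ t) (Γ₁ t) = 1 :=
    herm_self_eq_one (h00 t) (h01 t) (h11 t) (hdet t)
  have h02 (t : ℝ) : herm (Γ t) (Γ₂ t) = -1 := by linear_combination h11 t - h11_one t
  have hdet' (t : ℝ) : det3 (Γ t) (Γ₁ t) (Γ₃ t) = 0 := by
    have h := ((hΓ₀ t).det3 (hΓ₁ t) (hΓ₂ t)).eq_zero_of_forall_eq hdet
    rwa [det3_self_left, det3_self_right, zero_add, zero_add] at h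
  intro t
  have h03 : herm (Γ t) (Γ₃ t) = 0 := by
    have h := herm_mul_herm_mul_herm (c := Γ₂ t) (d := Γ₃ t) (h00 t) (h01 t)
    rw [hdet' t, h11_one t, herm_conj_symm (Γ t) (Γ₂ t), h02 t, map_neg, map_one] at h
    linear_combination -h
  have h12 := ((hΓ₀ t).herm (hΓ₂ t)).eq_zero_of_forall_eq h02
  exact ⟨by linear_combination h12 - h03, h03, h11_one t, h02 t⟩
end

section
/- Let Γ : I → ℂ³ be a normalized lift of a Legendrian curve (so ⟨Γ,Γ⟩ = ⟨Γ,Γ'⟩ = ⟨Γ',Γ''⟩ = 0, ⟨Γ',Γ'⟩ = −⟨Γ,Γ''⟩ = 1 and det(Γ,Γ',Γ'') = i), and let h : J → I be a smooth change of parameter with h' ≠ 0. Then Γ̃ := (1/h')·(Γ∘h) is a normalized lift of the reparameterized curve, i.e. det(Γ̃, Γ̃', Γ̃'') = i. -/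
/-!
With `g = 1 / h'`, the vectors `Γ̃, Γ̃', Γ̃''` are obtained from `Γ ∘ h, Γ' ∘ h, Γ'' ∘ h` by a
lower triangular matrix with diagonal `g, g h', g h'²` (chain and product rules), so the
determinant gets multiplied by `(g h')³ = 1`.
-/

open Complex

theorem det3_smul_add_smul_add_smul (a b c : Fin 3 → ℂ) (α β γ x y z : ℂ) :
    det3 (α • a) (x • a + β • b) (y • a + z • b + γ • c) = α * β * γ * det3 a b c := by
  simp only [det3, Matrix.det_fin_three, Matrix.of_apply, Matrix.cons_val', Matrix.cons_val_zero,
    Matrix.cons_val_fin_one, Matrix.cons_val_one, Matrix.cons_val, Pi.add_apply, Pi.smul_apply,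
    smul_eq_mul]
  ring

section SmulComp

variable {E : Type*} [NormedAddCommGroup E] [NormedSpace ℂ E] {g : ℝ → ℂ} {Γ : ℝ → E}
  {h : ℝ → ℝ}

theorem HasDerivAt.smul_comp {g' : ℂ} {Γ' : E} {h' u : ℝ} (hg : HasDerivAt g g' u)
    (hΓ : HasDerivAt Γ Γ' (h u)) (hh : HasDerivAt h h' u) :
    HasDerivAt (fun v => g v • Γ (h v)) (g' • Γ (h u) + (g u * h') • Γ') u := by
  refine (hg.smul (hΓ.scomp u hh)).congr_deriv ?_
  rw [add_comm, mul_smul, Complex.coe_smul, Function.comp_apply]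

theorem deriv_smul_comp (hg : Differentiable ℝ g) (hΓ : Differentiable ℝ Γ)
    (hh : Differentiable ℝ h) :
    deriv (fun u => g u • Γ (h u)) =
      fun u => deriv g u • Γ (h u) + (g u * deriv h u) • deriv Γ (h u) :=
  funext fun u => ((hg u).hasDerivAt.smul_comp (hΓ (h u)).hasDerivAt (hh u).hasDerivAt).deriv

theorem iteratedDeriv_two_smul_comp (hg : ContDiff ℝ 2 g) (hΓ : ContDiff ℝ 2 Γ)
    (hh : ContDiff ℝ 2 h) (u : ℝ) :
    iteratedDeriv 2 (fun u => g u • Γ (h u)) u =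
      iteratedDeriv 2 g u • Γ (h u)
        + (2 * deriv g u * deriv h u + g u * iteratedDeriv 2 h u) • deriv Γ (h u)
        + (g u * deriv h u ^ 2) • iteratedDeriv 2 Γ (h u) := by
  have hg' := hg.differentiable two_ne_zero
  have hΓ' := hΓ.differentiable two_ne_zero
  have hh' := hh.differentiable two_ne_zero
  have hg'' : Differentiable ℝ (deriv g) := (hg.iterate_deriv' 1 1).differentiable one_ne_zero
  have hΓ'' : Differentiable ℝ (deriv Γ) := (hΓ.iterate_deriv' 1 1).differentiable one_ne_zero
  have hh'' : Differentiable ℝ (deriv h) := (hh.iterate_deriv' 1 1).differentiable one_ne_zero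
  have hgh : HasDerivAt (fun v => g v * deriv h v)
      (deriv g u * deriv h u + g u * iteratedDeriv 2 h u) u := by
    rw [iteratedDeriv_succ, iteratedDeriv_one]
    exact (hg' u).hasDerivAt.mul (hh'' u).hasDerivAt.ofReal_comp
  rw [iteratedDeriv_succ, iteratedDeriv_one, deriv_smul_comp hg' hΓ' hh']
  refine (((hg'' u).hasDerivAt.smul_comp (hΓ' (h u)).hasDerivAt (hh' u).hasDerivAt).add
    (hgh.smul_comp (hΓ'' (h u)).hasDerivAt (hh' u).hasDerivAt)).deriv.trans ?_
  simp only [iteratedDeriv_succ, iteratedDeriv_zero]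
  module

end SmulComp

theorem stmt1_general (Γ : ℝ → (Fin 3 → ℂ)) (hΓ : ContDiff ℝ (⊤ : ℕ∞) Γ)
    (hdet : ∀ t, det3 (Γ t) (iteratedDeriv 1 Γ t) (iteratedDeriv 2 Γ t) = Complex.I)
    (h : ℝ → ℝ) (hh : ContDiff ℝ (⊤ : ℕ∞) h) (hh' : ∀ s, deriv h s ≠ 0) :
    ∀ s, det3 ((fun u => (((deriv h u : ℝ) : ℂ))⁻¹ • Γ (h u)) s)
      (iteratedDeriv 1 (fun u => (((deriv h u : ℝ) : ℂ))⁻¹ • Γ (h u)) s)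
      (iteratedDeriv 2 (fun u => (((deriv h u : ℝ) : ℂ))⁻¹ • Γ (h u)) s) = Complex.I := by
  intro s
  have two_le : ((2 : ℕ∞) : WithTop ℕ∞) ≤ (⊤ : ℕ∞) := by exact_mod_cast le_top
  have hΓ2 : ContDiff ℝ 2 Γ := hΓ.of_le two_le
  have hh2 : ContDiff ℝ 2 h := hh.of_le two_le
  have hg : ContDiff ℝ 2 fun u => (((deriv h u : ℝ) : ℂ))⁻¹ :=
    (ofRealCLM.contDiff.comp ((contDiff_infty_iff_deriv.mp hh).2.of_le two_le)).inv
      fun u => ofReal_ne_zero.mpr (hh' u)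
  rw [iteratedDeriv_one, deriv_smul_comp (hg.differentiable two_ne_zero)
      (hΓ2.differentiable two_ne_zero) (hh2.differentiable two_ne_zero),
    iteratedDeriv_two_smul_comp hg hΓ2 hh2, det3_smul_add_smul_add_smul,
    ← iteratedDeriv_one (f := Γ), hdet]
  have hne : ((deriv h s : ℝ) : ℂ) ≠ 0 := ofReal_ne_zero.mpr (hh' s)
  field_simp

theorem stmt1 (Γ : ℝ → (Fin 3 → ℂ)) (hΓ : ContDiff ℝ (⊤ : ℕ∞) Γ)
    (h00 : ∀ t, herm (Γ t) (Γ t) = 0)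
    (h01 : ∀ t, herm (Γ t) (iteratedDeriv 1 Γ t) = 0)
    (h12 : ∀ t, herm (iteratedDeriv 1 Γ t) (iteratedDeriv 2 Γ t) = 0)
    (h11 : ∀ t, herm (iteratedDeriv 1 Γ t) (iteratedDeriv 1 Γ t) = 1)
    (h02 : ∀ t, herm (Γ t) (iteratedDeriv 2 Γ t) = -1)
    (hdet : ∀ t, det3 (Γ t) (iteratedDeriv 1 Γ t) (iteratedDeriv 2 Γ t) = Complex.I)
    (h : ℝ → ℝ) (hh : ContDiff ℝ (⊤ : ℕ∞) h) (hh' : ∀ s, deriv h s ≠ 0) :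
    ∀ s, det3 ((fun u => (((deriv h u : ℝ) : ℂ))⁻¹ • Γ (h u)) s)
      (iteratedDeriv 1 (fun u => (((deriv h u : ℝ) : ℂ))⁻¹ • Γ (h u)) s)
      (iteratedDeriv 2 (fun u => (((deriv h u : ℝ) : ℂ))⁻¹ • Γ (h u)) s) = Complex.I :=
  stmt1_general Γ hΓ hdet h hh hh'
end

section
/- Let f be a smooth real function and t* a point at which f and all derivatives f', ..., f^{(n)} vanish. Then the 5n-th derivative of (f')⁵ at t* equals c_{1,n}·(f^{(n+1)}(t*))⁵ where c_{1,n} = (5n)!/ (n!)⁵. -/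
/-!
By Leibniz's rule, the `(∑ aᵢ)`-th derivative of `∏ gᵢ` at `x` is a sum of products
`∏ gᵢ⁽ᵏⁱ⁾(x)` with `∑ kᵢ = ∑ aᵢ`. If `gᵢ` vanishes to order `aᵢ` at `x`, every product with some
`kᵢ < aᵢ` is zero, so only `kᵢ = aᵢ` survives, with the multinomial coefficient in front.
Apply this to five copies of `f'`, which vanishes to order `n` at `t*`.
-/

open Finset

theorem Nat.multinomial_range_const {K : Type*} [Field K] [CharZero K] (m a : ℕ) :
    (Nat.multinomial (range m) (fun _ => a) : K) = (m * a).factorial / (a.factorial : K) ^ m := by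
  have h := Nat.multinomial_spec (range m) (fun _ => a)
  simp only [prod_const, card_range, sum_const, smul_eq_mul] at h
  rw [eq_div_iff (pow_ne_zero _ (Nat.cast_ne_zero.mpr a.factorial_ne_zero)), ← h]
  push_cast
  ring

section

variable {𝕜 : Type*} [NontriviallyNormedField 𝕜]

def VanishesToOrder {F : Type*} [NormedAddCommGroup F] [NormedSpace 𝕜 F]
    (f : 𝕜 → F) (x : 𝕜) (a : ℕ) : Prop :=
  ∀ k < a, iteratedDeriv k f x = 0

namespace VanishesToOrder

variable {x : 𝕜}

section NormedRing

variable {𝔸 : Type*} [NormedRing 𝔸] [NormedAlgebra 𝕜 𝔸] {f g : 𝕜 → 𝔸} {a b : ℕ}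

theorem mul (hf : VanishesToOrder f x a) (hg : VanishesToOrder g x b)
    (hfd : ContDiffAt 𝕜 (a + b : ℕ) f x) (hgd : ContDiffAt 𝕜 (a + b : ℕ) g x) :
    VanishesToOrder (f * g) x (a + b) := by
  intro m hm
  have hm' : (m : WithTop ℕ∞) ≤ (a + b : ℕ) := by exact_mod_cast hm.le
  rw [iteratedDeriv_mul (hfd.of_le hm') (hgd.of_le hm')]
  refine sum_eq_zero fun i hi => ?_
  rcases lt_or_ge i a with hia | hia
  · simp [hf i hia]
  · simp [hg (m - i) (by grind)]

theorem iteratedDeriv_mul_eq (hf : VanishesToOrder f x a) (hg : VanishesToOrder g x b)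
    (hfd : ContDiffAt 𝕜 (a + b : ℕ) f x) (hgd : ContDiffAt 𝕜 (a + b : ℕ) g x) :
    iteratedDeriv (a + b) (f * g) x
      = (a + b).choose a * iteratedDeriv a f x * iteratedDeriv b g x := by
  rw [iteratedDeriv_mul hfd hgd, sum_eq_single a]
  · simp
  · intro i hi hia
    rcases hia.lt_or_gt with hia | hia
    · simp [hf i hia]
    · simp [hg (a + b - i) (by grind)]
  · simp

end NormedRing

variable {𝔸 : Type*} [NormedCommRing 𝔸] [NormedAlgebra 𝕜 𝔸] {ι : Type*} {s : Finset ι}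
  {g : ι → 𝕜 → 𝔸} {a : ι → ℕ}

theorem prod (hg : ∀ i ∈ s, VanishesToOrder (g i) x (a i))
    (hgd : ∀ i ∈ s, ContDiffAt 𝕜 (∑ j ∈ s, a j : ℕ) (g i) x) :
    VanishesToOrder (∏ i ∈ s, g i) x (∑ i ∈ s, a i) := by
  induction s using cons_induction with
  | empty => simp [VanishesToOrder]
  | cons i s _ ih =>
    simp only [forall_mem_cons, sum_cons, prod_cons] at hg hgd ⊢
    have hle : ((∑ j ∈ s, a j : ℕ) : WithTop ℕ∞) ≤ (a i + ∑ j ∈ s, a j : ℕ) := by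
      exact_mod_cast Nat.le_add_left _ _
    exact hg.1.mul (ih hg.2 fun j hj => (hgd.2 j hj).of_le hle) hgd.1
      (contDiffAt_prod' hgd.2)

theorem iteratedDeriv_prod_eq (hg : ∀ i ∈ s, VanishesToOrder (g i) x (a i))
    (hgd : ∀ i ∈ s, ContDiffAt 𝕜 (∑ j ∈ s, a j : ℕ) (g i) x) :
    iteratedDeriv (∑ i ∈ s, a i) (∏ i ∈ s, g i) x
      = Nat.multinomial s a * ∏ i ∈ s, iteratedDeriv (a i) (g i) x := by
  induction s using cons_induction with
  | empty => simp
  | cons i s _ ih =>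
    simp only [forall_mem_cons, sum_cons, prod_cons] at hg hgd ⊢
    have hle : ((∑ j ∈ s, a j : ℕ) : WithTop ℕ∞) ≤ (a i + ∑ j ∈ s, a j : ℕ) := by
      exact_mod_cast Nat.le_add_left _ _
    have hsd : ∀ k ∈ s, ContDiffAt 𝕜 (∑ j ∈ s, a j : ℕ) (g k) x :=
      fun k hk => (hgd.2 k hk).of_le hle
    rw [hg.1.iteratedDeriv_mul_eq (prod hg.2 hsd) hgd.1 (contDiffAt_prod' hgd.2), ih hg.2 hsd,
      Nat.multinomial_cons]
    push_cast
    ring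

theorem iteratedDeriv_pow_eq {f : 𝕜 → 𝔸} {a : ℕ} (hf : VanishesToOrder f x a) (m : ℕ)
    (hfd : ContDiffAt 𝕜 (m * a : ℕ) f x) :
    iteratedDeriv (m * a) (f ^ m) x
      = Nat.multinomial (range m) (fun _ => a) * iteratedDeriv a f x ^ m := by
  simpa using iteratedDeriv_prod_eq (s := range m) (g := fun _ => f) (fun _ _ => hf)
    (by simpa using fun _ _ => hfd)

end VanishesToOrder

end

/-- If f and its derivatives up to order n vanish at t₀, then the 5n-th derivative of (f')⁵
at t₀ equals ((5n)!/(n!)⁵)·(f⁽ⁿ⁺¹⁾(t₀))⁵. -/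
theorem stmt6 (f : ℝ → ℝ) (hf : ContDiff ℝ (⊤ : ℕ∞) f) (n : ℕ) (t0 : ℝ)
    (h : ∀ k ≤ n, iteratedDeriv k f t0 = 0) :
    iteratedDeriv (5*n) (fun t => (deriv f t)^5) t0
      = (((5*n).factorial : ℝ) / ((n.factorial : ℝ))^5) * (iteratedDeriv (n+1) f t0)^5 := by
  have hvan : VanishesToOrder (deriv f) t0 n := fun k hk => by
    rw [← iteratedDeriv_succ']
    exact h (k + 1) (by omega)
  have hdiff : ContDiff ℝ (⊤ : ℕ∞) (deriv f) := (contDiff_infty_iff_deriv.mp hf).2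
  rw [iteratedDeriv_succ', ← Nat.multinomial_range_const]
  exact hvan.iteratedDeriv_pow_eq 5 (hdiff.contDiffAt.of_le (WithTop.coe_le_coe.mpr le_top))
end

section
/- Suppose a is a smooth real function on an interval satisfying the ODE 𝔱 = 0, where 𝔱 = −6160 a'⁵ + 13200 a a'³ a'' − 5400 a² a' a''² − 3600 a² a'² a''' + 1350 a³ a'' a''' + 675 a³ a' a⁗ − 81 a⁴ a⁽⁵⁾. If a(t*) = 0 at some point t*, then all derivatives of a vanish at t*: a^{(n)}(t*) = 0 for every n ≥ 0. -/
open Filter Topology Nat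
open scoped ContDiff

/-!
Suppose `a⁽ᵏ⁾(t₀) = 0` for `k < N`, with `N ≥ 1`, and put `c = a⁽ᴺ⁾(t₀) / N!`. By Taylor's
theorem, `(t - t₀)ʲ a⁽ʲ⁾(t) / (t - t₀)ᴺ → c · N (N - 1) ⋯ (N - j + 1)` as `t → t₀` for every `j`
(for `j > N` both the limit and the product are `0`). Each monomial of `𝔱` has degree 5 and
contains five derivatives in total, so `𝔱` evaluated at these quotients is
`(t - t₀)⁵ 𝔱(t) / (t - t₀)⁵ᴺ = 0`. Passing to the limit gives
`-4 N (2N + 3) (N + 3) (2N + 9) (N + 6) c⁵ = 0`, hence `c = 0`, and induction on `N` finishes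
the proof.
-/

/-- `𝔱` as a polynomial in the jet: `x j` stands for `a⁽ʲ⁾(t)`. -/
def stressPoly (x : ℕ → ℝ) : ℝ :=
  -6160 * x 1 ^ 5 + 13200 * x 0 * x 1 ^ 3 * x 2 - 5400 * x 0 ^ 2 * x 1 * x 2 ^ 2
    - 3600 * x 0 ^ 2 * x 1 ^ 2 * x 3 + 1350 * x 0 ^ 3 * x 2 * x 3
    + 675 * x 0 ^ 3 * x 1 * x 4 - 81 * x 0 ^ 4 * x 5

lemma stressPoly_weighted (r s : ℝ) (x : ℕ → ℝ) :
    stressPoly (fun j => r * s ^ j * x j) = r ^ 5 * s ^ 5 * stressPoly x := by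
  unfold stressPoly; ring

lemma continuous_stressPoly : Continuous stressPoly := by
  unfold stressPoly; fun_prop

lemma stressPoly_descFactorial (c : ℝ) (N : ℕ) :
    stressPoly (fun j => c * N.descFactorial j)
      = -(4 * N * (2 * N + 3) * (N + 3) * (2 * N + 9) * (N + 6)) * c ^ 5 := by
  simp only [stressPoly, ← descPochhammer_eval_eq_descFactorial ℝ, descPochhammer_succ_eval,
    descPochhammer_zero, Polynomial.eval_one]
  push_cast
  ring

lemma iteratedDeriv_iteratedDeriv {𝕜 F : Type*} [NontriviallyNormedField 𝕜] [NormedAddCommGroup F]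
    [NormedSpace 𝕜 F] (f : 𝕜 → F) (j k : ℕ) :
    iteratedDeriv k (iteratedDeriv j f) = iteratedDeriv (k + j) f := by
  simp only [iteratedDeriv_eq_iterate, Function.iterate_add]
  rfl

lemma tendsto_div_pow_of_iteratedDeriv_eq_zero {f : ℝ → ℝ} {x₀ : ℝ} {n : ℕ}
    (hf : ContDiff ℝ n f) (h : ∀ k < n, iteratedDeriv k f x₀ = 0) :
    Tendsto (fun x => f x / (x - x₀) ^ n) (𝓝[≠] x₀) (𝓝 (iteratedDeriv n f x₀ / n !)) := by
  have htaylor : ∀ x, taylorWithinEval f n Set.univ x₀ x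
      = iteratedDeriv n f x₀ / n ! * (x - x₀) ^ n := by
    intro x
    rw [taylor_within_apply, Finset.sum_range_succ, Finset.sum_eq_zero fun k hk => by
      simp [iteratedDerivWithin_univ, h k (Finset.mem_range.1 hk)]]
    simp only [iteratedDerivWithin_univ, smul_eq_mul, zero_add]
    ring
  have hlim := ((taylor_tendsto convex_univ (Set.mem_univ x₀) hf.contDiffOn).mono_left
    (nhdsWithin_mono x₀ (Set.subset_univ {x₀}ᶜ))).const_add (iteratedDeriv n f x₀ / n !)
  rw [add_zero] at hlim
  refine hlim.congr' (eventually_nhdsWithin_of_forall fun x (hx : x ≠ x₀) => ?_)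
  have : (x - x₀) ^ n ≠ 0 := pow_ne_zero _ (sub_ne_zero.2 hx)
  rw [htaylor, smul_eq_mul]
  field_simp
  ring

lemma tendsto_weighted_iteratedDeriv {f : ℝ → ℝ} {x₀ : ℝ} {N : ℕ} (hf : ContDiff ℝ ∞ f)
    (h : ∀ k < N, iteratedDeriv k f x₀ = 0) (j : ℕ) :
    Tendsto (fun x => ((x - x₀) ^ N)⁻¹ * (x - x₀) ^ j * iteratedDeriv j f x) (𝓝[≠] x₀)
      (𝓝 (iteratedDeriv N f x₀ / N ! * N.descFactorial j)) := by
  have hsmooth : ContDiff ℝ ∞ (iteratedDeriv j f) := by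
    rw [iteratedDeriv_eq_iterate]; exact hf.iterate_deriv j
  rcases le_or_gt j N with hj | hj
  · obtain ⟨k, rfl⟩ := Nat.exists_eq_add_of_le' hj
    have hlim := tendsto_div_pow_of_iteratedDeriv_eq_zero (n := k)
      (hsmooth.of_le (by exact_mod_cast le_top)) fun i hi => by
        rw [iteratedDeriv_iteratedDeriv]; exact h _ (by omega)
    have hcoeff : iteratedDeriv (k + j) f x₀ / k !
        = iteratedDeriv (k + j) f x₀ / (k + j)! * (k + j).descFactorial j := by
      have : ((k + j).descFactorial j : ℝ) ≠ 0 := by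
        exact_mod_cast (Nat.descFactorial_pos.2 hj).ne'
      rw [← Nat.factorial_mul_descFactorial hj, Nat.add_sub_cancel, Nat.cast_mul]
      field_simp
    rw [iteratedDeriv_iteratedDeriv, hcoeff] at hlim
    refine hlim.congr' (eventually_nhdsWithin_of_forall fun x (hx : x ≠ x₀) => ?_)
    have : x - x₀ ≠ 0 := sub_ne_zero.2 hx
    dsimp only
    rw [pow_add]
    field_simp
  · obtain ⟨k, rfl⟩ := Nat.exists_eq_add_of_lt hj
    have hcont : Continuous fun x => (x - x₀) ^ (k + 1) * iteratedDeriv (N + k + 1) f x :=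
      (continuous_sub_right x₀).pow _ |>.mul hsmooth.continuous
    have hlim := (hcont.tendsto x₀).mono_left (nhdsWithin_le_nhds (s := {x₀}ᶜ))
    rw [Nat.descFactorial_of_lt hj]
    simp only [sub_self, zero_pow (Nat.succ_ne_zero k), zero_mul, Nat.cast_zero, mul_zero] at hlim ⊢
    refine hlim.congr' (eventually_nhdsWithin_of_forall fun x (hx : x ≠ x₀) => ?_)
    have : x - x₀ ≠ 0 := sub_ne_zero.2 hx
    field_simp
    ring

/-- If a smooth function a satisfies the stress equation 𝔱 = 0 and vanishes at a point,
then all of its derivatives vanish at that point. -/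
theorem stmt7 (a : ℝ → ℝ) (ha : ContDiff ℝ (⊤ : ℕ∞) a)
    (hode : ∀ t, -6160 * (deriv a t)^5
      + 13200 * a t * (deriv a t)^3 * (iteratedDeriv 2 a t)
      - 5400 * (a t)^2 * deriv a t * (iteratedDeriv 2 a t)^2
      - 3600 * (a t)^2 * (deriv a t)^2 * iteratedDeriv 3 a t
      + 1350 * (a t)^3 * iteratedDeriv 2 a t * iteratedDeriv 3 a t
      + 675 * (a t)^3 * deriv a t * iteratedDeriv 4 a t
      - 81 * (a t)^4 * iteratedDeriv 5 a t = 0)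
    (t0 : ℝ) (h0 : a t0 = 0) :
    ∀ n : ℕ, iteratedDeriv n a t0 = 0 := by
  intro N
  induction N using Nat.strong_induction_on with
  | _ N ih =>
  rcases N with _ | M
  · simpa using h0
  set c := iteratedDeriv (M + 1) a t0 / (M + 1)!
  have hjet (t : ℝ) : stressPoly (fun j => iteratedDeriv j a t) = 0 := by
    simpa [stressPoly] using hode t
  have hlim : Tendsto
      (fun t => stressPoly fun j => ((t - t0) ^ (M + 1))⁻¹ * (t - t0) ^ j * iteratedDeriv j a t)
      (𝓝[≠] t0) (𝓝 (stressPoly fun j => c * (M + 1).descFactorial j)) :=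
    (continuous_stressPoly.tendsto _).comp
      (tendsto_pi_nhds.2 (tendsto_weighted_iteratedDeriv ha ih))
  have hzero : stressPoly (fun j => c * (M + 1).descFactorial j) = 0 :=
    tendsto_nhds_unique hlim <| by
      simpa only [stressPoly_weighted, hjet, mul_zero] using tendsto_const_nhds
  have hc : c ^ 5 = 0 := by
    rw [stressPoly_descFactorial] at hzero
    refine (mul_eq_zero.1 hzero).resolve_left (neg_ne_zero.2 ?_)
    push_cast
    positivity
  simpa [c, Nat.factorial_ne_zero] using hc
end

section
/- Fix m ∈ (0,1) and ℓ > 0 and let κ(s) = (3/2)ℓ²((m+1)/3 − m·sn²(ℓs, m)), where sn(·,m) is the Jacobi elliptic sine with parameter m (square of the modulus). Then κ satisfies κ''' + 8κκ' = 0, and moreover κ'' + 4κ² = (3/8)m₂ and (κ')² + (8/3)κ³ − (3/4)m₂κ + 9(1+m₃/8) = 0, with m₂ = (8/3)(1−m+m²)ℓ⁴ and m₃ = (8/27)(ℓ⁶(2m³−3m²−3m+2) − 27). -/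
/-!
Differentiating `κ` twice and eliminating `sn'²` and `sn''` with the two ODEs gives the
second-order equation `κ'' = (1 - m + m²) ℓ⁴ - 4κ²`, and differentiating that once more gives
`κ''' = -8κκ'`. The remaining first integral is the ODE `sn'² = (1 - sn²)(1 - m sn²)` written
as a cubic in `κ`, since `sn²(ℓs)` is an affine function of `κ(s)`.
-/

theorem hasDerivAt_comp_const_mul {𝕜 : Type*} [NontriviallyNormedField 𝕜] {f : 𝕜 → 𝕜}
    {f' c x : 𝕜} (hf : HasDerivAt f f' (c * x)) :
    HasDerivAt (fun y => f (c * y)) (c * f') x := by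
  simpa [Function.comp_def, mul_comm] using hf.comp x ((hasDerivAt_id x).const_mul c)

noncomputable def ellipticCurvature (sn : ℝ → ℝ) (m l s : ℝ) : ℝ :=
  (3/2) * l^2 * ((m+1)/3 - m * (sn (l*s))^2)

namespace ellipticCurvature

variable {sn : ℝ → ℝ} {m l : ℝ}

theorem hasDerivAt (hsn : Differentiable ℝ sn) (s : ℝ) :
    HasDerivAt (ellipticCurvature sn m l) (-3 * l^3 * m * (sn (l*s) * deriv sn (l*s))) s := by
  have h := (((hasDerivAt_comp_const_mul (hsn (l*s)).hasDerivAt).fun_pow 2).const_mul m).const_sub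
    ((m+1)/3) |>.const_mul ((3/2) * l^2)
  exact h.congr_deriv (by push_cast; ring)

theorem deriv_eq (hsn : Differentiable ℝ sn) :
    deriv (ellipticCurvature sn m l) = fun s => -3 * l^3 * m * (sn (l*s) * deriv sn (l*s)) :=
  funext fun s => (hasDerivAt hsn s).deriv

theorem deriv_deriv_eq (hsn : Differentiable ℝ sn) (hsn' : Differentiable ℝ (deriv sn))
    (hode1 : ∀ u, (deriv sn u)^2 = (1 - (sn u)^2) * (1 - m * (sn u)^2))
    (hode2 : ∀ u, deriv (deriv sn) u = -(1+m) * sn u + 2*m*(sn u)^3) (s : ℝ) :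
    deriv (deriv (ellipticCurvature sn m l)) s
      = (1 - m + m^2) * l^4 - 4 * (ellipticCurvature sn m l s)^2 := by
  have h := ((hasDerivAt_comp_const_mul (hsn (l*s)).hasDerivAt).fun_mul
    (hasDerivAt_comp_const_mul (hsn' (l*s)).hasDerivAt)).const_mul (-3 * l^3 * m)
  rw [deriv_eq hsn, h.deriv, hode2, ellipticCurvature]
  linear_combination (-3 * l^4 * m) * hode1 (l*s)

theorem iteratedDeriv_three (hsn : Differentiable ℝ sn) (hsn' : Differentiable ℝ (deriv sn))
    (hode1 : ∀ u, (deriv sn u)^2 = (1 - (sn u)^2) * (1 - m * (sn u)^2))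
    (hode2 : ∀ u, deriv (deriv sn) u = -(1+m) * sn u + 2*m*(sn u)^3) (s : ℝ) :
    iteratedDeriv 3 (ellipticCurvature sn m l) s
      = -8 * ellipticCurvature sn m l s * deriv (ellipticCurvature sn m l) s := by
  have hκ'' : deriv (deriv (ellipticCurvature sn m l))
      = fun s => (1 - m + m^2) * l^4 - 4 * (ellipticCurvature sn m l s)^2 :=
    funext (deriv_deriv_eq hsn hsn' hode1 hode2)
  have h := (((hasDerivAt (m := m) (l := l) hsn s).fun_pow 2).const_mul 4).const_sub
    ((1 - m + m^2) * l^4)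
  rw [iteratedDeriv_succ, iteratedDeriv_succ, iteratedDeriv_one, hκ'', h.deriv,
    (hasDerivAt hsn s).deriv]
  ring

theorem deriv_sq_eq (hsn : Differentiable ℝ sn)
    (hode1 : ∀ u, (deriv sn u)^2 = (1 - (sn u)^2) * (1 - m * (sn u)^2)) (s : ℝ) :
    (deriv (ellipticCurvature sn m l) s)^2
      = -(8/3) * (ellipticCurvature sn m l s)^3
        + 2 * (1 - m + m^2) * l^4 * ellipticCurvature sn m l s
        - l^6 * (2*m^3 - 3*m^2 - 3*m + 2) / 3 := by
  rw [deriv_eq hsn, ellipticCurvature]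
  linear_combination (9 * l^6 * m^2 * (sn (l*s))^2) * hode1 (l*s)

end ellipticCurvature

open ellipticCurvature in
theorem stmt9_general (m l : ℝ)
    (sn : ℝ → ℝ) (hsn : ContDiff ℝ (⊤ : ℕ∞) sn)
    (hode1 : ∀ u, (deriv sn u)^2 = (1 - (sn u)^2) * (1 - m * (sn u)^2))
    (hode2 : ∀ u, iteratedDeriv 2 sn u = -(1+m) * sn u + 2*m*(sn u)^3) :
    (∀ s, iteratedDeriv 3 (fun s => (3/2) * l^2 * ((m+1)/3 - m * (sn (l*s))^2)) s
        + 8 * ((3/2) * l^2 * ((m+1)/3 - m * (sn (l*s))^2))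
            * deriv (fun s => (3/2) * l^2 * ((m+1)/3 - m * (sn (l*s))^2)) s = 0) ∧
    (∀ s, iteratedDeriv 2 (fun s => (3/2) * l^2 * ((m+1)/3 - m * (sn (l*s))^2)) s
        + 4 * ((3/2) * l^2 * ((m+1)/3 - m * (sn (l*s))^2))^2
        = (3/8) * ((8/3)*(1-m+m^2)*l^4)) ∧
    (∀ s, (deriv (fun s => (3/2) * l^2 * ((m+1)/3 - m * (sn (l*s))^2)) s)^2
        + (8/3) * ((3/2) * l^2 * ((m+1)/3 - m * (sn (l*s))^2))^3
        - (3/4) * ((8/3)*(1-m+m^2)*l^4) * ((3/2) * l^2 * ((m+1)/3 - m * (sn (l*s))^2))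
        + 9 * (1 + ((8/27)*(l^6*(2*m^3-3*m^2-3*m+2) - 27))/8) = 0) := by
  have hd : Differentiable ℝ sn := hsn.differentiable (by simp)
  have hd' : Differentiable ℝ (deriv sn) :=
    (contDiff_infty_iff_deriv.mp hsn).2.differentiable (by simp)
  have hode2' : ∀ u, deriv (deriv sn) u = -(1+m) * sn u + 2*m*(sn u)^3 := by
    simpa only [iteratedDeriv_succ, iteratedDeriv_zero] using hode2
  have hκ : (fun s => (3/2) * l^2 * ((m+1)/3 - m * (sn (l*s))^2)) = ellipticCurvature sn m l :=
    rfl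
  refine ⟨fun s => ?_, fun s => ?_, fun s => ?_⟩ <;> rw [hκ]
  · rw [iteratedDeriv_three hd hd' hode1 hode2' s, ellipticCurvature]
    ring
  · rw [iteratedDeriv_succ, iteratedDeriv_one, deriv_deriv_eq hd hd' hode1 hode2' s,
      ellipticCurvature]
    ring
  · rw [deriv_sq_eq hd hode1 s, ellipticCurvature]
    ring

/-- For any function sn satisfying the Jacobi elliptic sine ODEs with parameter m
((sn')² = (1−sn²)(1−m·sn²), sn'' = −(1+m)sn + 2m·sn³, sn(0)=0), the function
κ(s) = (3/2)ℓ²((m+1)/3 − m·sn²(ℓs)) satisfies κ''' + 8κκ' = 0 together with the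
stated first integrals with m₂ = (8/3)(1−m+m²)ℓ⁴, m₃ = (8/27)(ℓ⁶(2m³−3m²−3m+2)−27). -/
theorem stmt9 (m l : ℝ) (hm : m ∈ Set.Ioo (0:ℝ) 1) (hl : 0 < l)
    (sn : ℝ → ℝ) (hsn : ContDiff ℝ (⊤ : ℕ∞) sn)
    (hsn0 : sn 0 = 0)
    (hode1 : ∀ u, (deriv sn u)^2 = (1 - (sn u)^2) * (1 - m * (sn u)^2))
    (hode2 : ∀ u, iteratedDeriv 2 sn u = -(1+m) * sn u + 2*m*(sn u)^3) :
    (∀ s, iteratedDeriv 3 (fun s => (3/2) * l^2 * ((m+1)/3 - m * (sn (l*s))^2)) s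
        + 8 * ((3/2) * l^2 * ((m+1)/3 - m * (sn (l*s))^2))
            * deriv (fun s => (3/2) * l^2 * ((m+1)/3 - m * (sn (l*s))^2)) s = 0) ∧
    (∀ s, iteratedDeriv 2 (fun s => (3/2) * l^2 * ((m+1)/3 - m * (sn (l*s))^2)) s
        + 4 * ((3/2) * l^2 * ((m+1)/3 - m * (sn (l*s))^2))^2
        = (3/8) * ((8/3)*(1-m+m^2)*l^4)) ∧
    (∀ s, (deriv (fun s => (3/2) * l^2 * ((m+1)/3 - m * (sn (l*s))^2)) s)^2
        + (8/3) * ((3/2) * l^2 * ((m+1)/3 - m * (sn (l*s))^2))^3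
        - (3/4) * ((8/3)*(1-m+m^2)*l^4) * ((3/2) * l^2 * ((m+1)/3 - m * (sn (l*s))^2))
        + 9 * (1 + ((8/27)*(l^6*(2*m^3-3*m^2-3*m+2) - 27))/8) = 0) :=
  stmt9_general m l sn hsn hode1 hode2
end

section
/- Let λ be a root of the characteristic polynomial of the matrix K_c = (E¹₂ + E³₁ + iE²₃) − c(E²₁ − iE³₂) (a traceless 3×3 complex matrix depending on the real parameter c). Then K_c has three distinct purely imaginary eigenvalues if and only if c > 3/(2·4^{1/3}). -/
/-!
Expanding the determinant gives `charpoly K_c = X³ + 2cX - i`, whose value at `z = iμ` is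
`-i (μ³ - 2cμ + 1)`; so everything reduces to the real cubic `μ³ - 2cμ + 1`, with discriminant
`32c³ - 27`. Three distinct roots of a depressed cubic satisfy the Vieta relations, which turn the
discriminant into the positive square `((a - b)(a - c)(b - c))²`. Conversely, for positive
discriminant the cubic is negative at `3 / (4c)`, positive at `0`, and the intermediate value
theorem gives three real roots, which then factor the cubic over `ℂ`.
-/

open Complex

/-- The matrix K_c = (E¹₂ + E³₁ + iE²₃) − c(E²₁ − iE³₂):
(1,2) entry 1, (3,1) entry 1, (2,3) entry i, (2,1) entry −c, (3,2) entry ic. -/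
noncomputable def Kc (c : ℝ) : Matrix (Fin 3) (Fin 3) ℂ :=
  !![0, 1, 0; -(c:ℂ), 0, Complex.I; 1, Complex.I * (c:ℂ), 0]

section DepressedCubic

variable {R : Type*}

theorem depressedCubic_vieta [CommRing R] [IsDomain R] {p q a b c : R}
    (hab : a ≠ b) (hac : a ≠ c) (hbc : b ≠ c)
    (ha : a ^ 3 + p * a + q = 0) (hb : b ^ 3 + p * b + q = 0) (hc : c ^ 3 + p * c + q = 0) :
    a + b + c = 0 ∧ a * b + a * c + b * c = p ∧ a * b * c = -q := by
  have hab' : a ^ 2 + a * b + b ^ 2 + p = 0 := by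
    refine (mul_eq_zero.mp ?_).resolve_left (sub_ne_zero.mpr hab)
    linear_combination ha - hb
  have hac' : a ^ 2 + a * c + c ^ 2 + p = 0 := by
    refine (mul_eq_zero.mp ?_).resolve_left (sub_ne_zero.mpr hac)
    linear_combination ha - hc
  have hsum : a + b + c = 0 := by
    refine (mul_eq_zero.mp ?_).resolve_left (sub_ne_zero.mpr hbc)
    linear_combination hab' - hac'
  refine ⟨hsum, ?_, ?_⟩
  · linear_combination -hab' + (a + b) * hsum
  · linear_combination ha - a * hab' + a * b * hsum

theorem depressedCubic_eq_prod [CommRing R] [IsDomain R] {p q a b c : R}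
    (hab : a ≠ b) (hac : a ≠ c) (hbc : b ≠ c)
    (ha : a ^ 3 + p * a + q = 0) (hb : b ^ 3 + p * b + q = 0) (hc : c ^ 3 + p * c + q = 0)
    (x : R) : x ^ 3 + p * x + q = (x - a) * (x - b) * (x - c) := by
  obtain ⟨h₁, h₂, h₃⟩ := depressedCubic_vieta hab hac hbc ha hb hc
  linear_combination x ^ 2 * h₁ - x * h₂ + h₃

theorem depressedCubic_discr_pos [CommRing R] [LinearOrder R] [IsStrictOrderedRing R]
    {p q a b c : R} (hab : a ≠ b) (hac : a ≠ c) (hbc : b ≠ c)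
    (ha : a ^ 3 + p * a + q = 0) (hb : b ^ 3 + p * b + q = 0) (hc : c ^ 3 + p * c + q = 0) :
    0 < -4 * p ^ 3 - 27 * q ^ 2 := by
  obtain ⟨h₁, h₂, h₃⟩ := depressedCubic_vieta hab hac hbc ha hb hc
  have hdiscr : ((a - b) * (a - c) * (b - c)) ^ 2 = -4 * p ^ 3 - 27 * q ^ 2 := by
    obtain rfl : p = a * b + a * c + b * c := h₂.symm
    obtain rfl : q = -(a * b * c) := by linear_combination h₃
    obtain rfl : c = -a - b := by linear_combination h₁
    ring
  rw [← hdiscr]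
  exact pow_two_pos_of_ne_zero <|
    mul_ne_zero (mul_ne_zero (sub_ne_zero.mpr hab) (sub_ne_zero.mpr hac)) (sub_ne_zero.mpr hbc)

end DepressedCubic

theorem exists_three_roots_depressedCubic {p q : ℝ} (hq : 0 < q)
    (hdiscr : 0 < -4 * p ^ 3 - 27 * q ^ 2) :
    ∃ a b c : ℝ, a < b ∧ b < c ∧
      a ^ 3 + p * a + q = 0 ∧ b ^ 3 + p * b + q = 0 ∧ c ^ 3 + p * c + q = 0 := by
  set f : ℝ → ℝ := fun x ↦ x ^ 3 + p * x + q with hf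
  have hfc : Continuous f := by fun_prop
  have hp : p < 0 := by
    by_contra! hp
    nlinarith [pow_nonneg hp 3, sq_nonneg q]
  -- `m` is the double root of the cubic at the critical discriminant
  set m := -3 * q / (2 * p) with hm
  have hm_pos : 0 < m := div_pos_of_neg_of_neg (by linarith) (by linarith)
  have hfm : f m < 0 := by
    have hp0 : p ≠ 0 := hp.ne
    have hpm : p * m = -3 * q / 2 := by rw [hm]; field_simp
    have hm3 : m ^ 3 * (8 * p ^ 3) = -27 * q ^ 3 := by rw [hm]; field_simp; ring
    have hp3 : p ^ 3 < 0 := Odd.pow_neg (by decide) hp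
    simp only [hf, hpm]
    nlinarith
  set r := 1 - p + q + m
  have hr_big : 1 + q < r * (r ^ 2 + p) := by nlinarith
  have hfr : 0 < f r := by simp only [hf]; nlinarith
  have hfnr : f (-r) < 0 := by simp only [hf]; nlinarith
  obtain ⟨a, ⟨ha₁, ha₂⟩, ha⟩ := intermediate_value_Ioo (by linarith) hfc.continuousOn
    (show 0 ∈ Set.Ioo (f (-r)) (f 0) from ⟨hfnr, by simpa [hf] using hq⟩)
  obtain ⟨b, ⟨hb₁, hb₂⟩, hb⟩ := intermediate_value_Ioo' hm_pos.le hfc.continuousOn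
    (show 0 ∈ Set.Ioo (f m) (f 0) from ⟨hfm, by simpa [hf] using hq⟩)
  obtain ⟨c, ⟨hc₁, hc₂⟩, hc⟩ := intermediate_value_Ioo (by linarith) hfc.continuousOn
    (show 0 ∈ Set.Ioo (f m) (f r) from ⟨hfm, hfr⟩)
  exact ⟨a, b, c, by linarith, by linarith, ha, hb, hc⟩

theorem three_div_two_mul_cbrt_four_lt_iff (c : ℝ) :
    3 / (2 * (4 : ℝ) ^ ((1 : ℝ) / 3)) < c ↔ 27 < 32 * c ^ 3 := by
  have ht3 : ((4 : ℝ) ^ ((1 : ℝ) / 3)) ^ 3 = 4 := by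
    rw [← Real.rpow_natCast, ← Real.rpow_mul (by norm_num)]
    norm_num
  rw [div_lt_iff₀ (by positivity), ← (by decide : Odd 3).pow_lt_pow, mul_pow, mul_pow, ht3]
  constructor <;> intro h <;> linarith

open Polynomial in
theorem Kc_charpoly (c : ℝ) : (Kc c).charpoly = X ^ 3 + C (2 * c : ℂ) * X + C (-I) := by
  rw [Matrix.charpoly, Matrix.det_fin_three]
  have hI : (C I : ℂ[X]) ^ 2 = -1 := by rw [← C_pow, I_sq, C_neg, C_1]
  simp [Kc]
  linear_combination -(X * C (c : ℂ)) * (hI + map_ofNat (C : ℂ →+* ℂ[X]) 2)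

theorem Kc_charpoly_eval (c : ℝ) (z : ℂ) :
    (Kc c).charpoly.eval z = z ^ 3 + 2 * c * z + -I := by
  simp [Kc_charpoly]

theorem isRoot_Kc_charpoly_I_mul_iff (c μ : ℝ) :
    (Kc c).charpoly.IsRoot (I * μ) ↔ μ ^ 3 + -(2 * c) * μ + 1 = 0 := by
  have h : (Kc c).charpoly.eval (I * μ) = -I * ((μ ^ 3 + -(2 * c) * μ + 1 : ℝ) : ℂ) := by
    rw [Kc_charpoly_eval]
    push_cast
    linear_combination I * μ ^ 3 * I_sq
  rw [Polynomial.IsRoot.def, h, mul_eq_zero, ofReal_eq_zero]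
  simp [I_ne_zero]

/-- K_c has three distinct purely imaginary eigenvalues iff c > 3/(2·∛4). -/
theorem stmt15 (c : ℝ) :
    (∃ μ1 μ2 μ3 : ℝ, μ1 ≠ μ2 ∧ μ1 ≠ μ3 ∧ μ2 ≠ μ3 ∧
      ∀ z : ℂ, (Kc c).charpoly.IsRoot z ↔
        (z = Complex.I * μ1 ∨ z = Complex.I * μ2 ∨ z = Complex.I * μ3)) ↔
    3 / (2 * (4:ℝ) ^ ((1:ℝ)/3)) < c := by
  rw [three_div_two_mul_cbrt_four_lt_iff, ← sub_pos,
    show 32 * c ^ 3 - 27 = -4 * (-(2 * c)) ^ 3 - 27 * 1 ^ 2 by ring]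
  constructor
  · rintro ⟨μ₁, μ₂, μ₃, h₁₂, h₁₃, h₂₃, hroots⟩
    have hμ (μ : ℝ) (h : I * μ = I * μ₁ ∨ I * μ = I * μ₂ ∨ I * μ = I * μ₃) :
        μ ^ 3 + -(2 * c) * μ + 1 = 0 :=
      (isRoot_Kc_charpoly_I_mul_iff c μ).mp ((hroots _).mpr h)
    exact depressedCubic_discr_pos h₁₂ h₁₃ h₂₃
      (hμ _ (by tauto)) (hμ _ (by tauto)) (hμ _ (by tauto))
  · intro hdiscr
    obtain ⟨μ₁, μ₂, μ₃, h₁₂, h₂₃, hμ₁, hμ₂, hμ₃⟩ :=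
      exists_three_roots_depressedCubic one_pos hdiscr
    have hI : Function.Injective fun μ : ℝ ↦ I * μ :=
      (mul_right_injective₀ I_ne_zero).comp ofReal_injective
    have hroot (μ : ℝ) (h : μ ^ 3 + -(2 * c) * μ + 1 = 0) :
        (I * μ) ^ 3 + 2 * c * (I * μ) + -I = 0 := by
      rw [← Kc_charpoly_eval]
      exact (isRoot_Kc_charpoly_I_mul_iff c μ).mpr h
    refine ⟨μ₁, μ₂, μ₃, h₁₂.ne, (h₁₂.trans h₂₃).ne, h₂₃.ne, fun z ↦ ?_⟩
    rw [Polynomial.IsRoot.def, Kc_charpoly_eval, depressedCubic_eq_prod (hI.ne h₁₂.ne)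
      (hI.ne (h₁₂.trans h₂₃).ne) (hI.ne h₂₃.ne) (hroot _ hμ₁) (hroot _ hμ₂) (hroot _ hμ₃)]
    simp only [mul_eq_zero, sub_eq_zero, or_assoc]
end
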